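/- Let Γ be a countable discrete group with a central element z of infinite order, let Z = ⟨z⟩ be the cyclic subgroup it generates, and let LZ be the abelian von Neumann subalgebra of B(ℓ²(Γ)) generated by the unitary λ(z). If p is any nonzero orthogonal projection in LZ and a ∈ ℂΓ satisfies λ(a)·p = 0, then a = 0. (That is, the restriction of the left regular representation to the invariant subspace p·ℓ²(Γ) is faithful on ℂΓ.) -/

import Mathlib

set_option maxHeartbeats 1000000
set_option synthInstance.maxHeartbeats 400000
noncomputable section

open scoped ENNReal

/-- ℓ²(Γ), the Hilbert space of square-summable complex functions on `G`. -/
abbrev l2 (G : Type*) := lp (fun _ : G => ℂ) 2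

namespace GroupCstar

lemma two_toReal_pos : 0 < (2 : ℝ≥0∞).toReal := by norm_num

/-- The linear isometry of ℓ² spaces induced by a bijection of index sets,
`f ↦ f ∘ e.symm`. -/
def lpShift {α β : Type*} (e : α ≃ β) : l2 α ≃ₗᵢ[ℂ] l2 β where
  toFun f := ⟨fun b => f (e.symm b), by
    show Memℓp _ 2
    rw [memℓp_gen_iff two_toReal_pos]
    exact e.symm.summable_iff.2 ((lp.memℓp f).summable two_toReal_pos)⟩
  invFun f := ⟨fun a => f (e a), by
    show Memℓp _ 2
    rw [memℓp_gen_iff two_toReal_pos]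
    exact e.summable_iff.2 ((lp.memℓp f).summable two_toReal_pos)⟩
  map_add' f g := rfl
  map_smul' c f := rfl
  left_inv f := by ext a; simp
  right_inv f := by ext b; simp
  norm_map' f := by
    rw [lp.norm_eq_tsum_rpow two_toReal_pos, lp.norm_eq_tsum_rpow two_toReal_pos]
    congr 1
    exact Equiv.tsum_eq e.symm fun b => ‖f b‖ ^ (2 : ℝ≥0∞).toReal

@[simp] lemma lpShift_apply {α β : Type*} (e : α ≃ β) (f : l2 α) (b : β) :
    (lpShift e f : ∀ _ : β, ℂ) b = f (e.symm b) := rfl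

variable (G : Type*) [Group G]

/-- The algebra `B(ℓ²(G))` of bounded operators on `ℓ²(G)`. -/
abbrev B := l2 G →L[ℂ] l2 G

variable {G}

/-- The left regular representation of a group element, as a bounded (unitary) operator on
ℓ²(G): `(leftReg g f) x = f (g⁻¹ * x)`. -/
def leftReg (g : G) : B G :=
  (lpShift (Equiv.mulLeft g)).toLinearIsometry.toContinuousLinearMap

@[simp] lemma leftReg_apply (g : G) (f : l2 G) (x : G) :
    (leftReg g f : ∀ _ : G, ℂ) x = f (g⁻¹ * x) := rfl

variable (G)

/-- The left regular representation as a monoid homomorphism into bounded operators. -/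
def leftRegMonoidHom : G →* B G where
  toFun := leftReg
  map_one' := by ext f x; simp
  map_mul' g h := by ext f x; simp [mul_assoc]

/-- The left regular representation `λ` of the complex group algebra `ℂ[G]` on `ℓ²(G)`,
extending `g ↦ leftReg g` linearly. -/
def lam : MonoidAlgebra ℂ G →ₐ[ℂ] B G :=
  (MonoidAlgebra.lift ℂ (B G) G) (leftRegMonoidHom G)

/-- δ_e, the canonical trace vector in ℓ²(G). -/
def deltaOne : l2 G :=
  letI := Classical.decEq G
  lp.single 2 (1 : G) (1 : ℂ)

variable {G}

/-- The canonical trace `τ(x) = ⟨x δ_e, δ_e⟩` on `B(ℓ²(G))` (in particular on the group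
von Neumann algebra).  Note: with the mathematician's convention (linear in the first
variable) `⟨x δ_e, δ_e⟩` is `inner δ_e (x δ_e)` in Mathlib's convention. -/
def tau (x : B G) : ℂ := inner (𝕜 := ℂ) (deltaOne G) (x (deltaOne G))

/-- The commutant of a set of bounded operators. -/
def commutant (S : Set (B G)) : Set (B G) := {x | ∀ s ∈ S, s * x = x * s}

variable (G)

/-- The group von Neumann algebra `LG`, realized as the double commutant of `λ(ℂ[G])`
inside `B(ℓ²(G))`. -/
def vN : Set (B G) := commutant (commutant (Set.range (lam G)))

/-- The center `Z(LG)` of the group von Neumann algebra. -/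
def vNCenter : Set (B G) := {x | x ∈ vN G ∧ ∀ y ∈ vN G, x * y = y * x}

variable {G}

/-- An orthogonal projection: a self-adjoint idempotent. -/
def IsProjection (p : B G) : Prop := IsSelfAdjoint p ∧ p * p = p

variable (G)

/-- The central granularity `σ(G)`: the infimum of the traces of the nonzero orthogonal
projections in the center of the group von Neumann algebra. -/
def centralGranularity : ℝ :=
  sInf ((fun p => (tau p).re) '' {p : B G | p ∈ vNCenter G ∧ IsProjection p ∧ p ≠ 0})

/-- The set of orders of finite subgroups of `G`. -/
def finSubgroupOrders : Set ℕ := {n | ∃ H : Subgroup G, Finite H ∧ Nat.card H = n}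

open scoped Classical in
/-- The torsion multiplier `θ(G) = 1 / lcm {|H| : H ≤ G finite}`, with the convention
that the lcm of an unbounded set is `∞` and `1/∞ = 0`. -/
def torsionMultiplier : ℝ :=
  if h : (finSubgroupOrders G).Finite then ((h.toFinset.lcm id : ℕ) : ℝ)⁻¹ else 0

/-- The additive subgroup of `ℝ` generated by the reciprocals of the orders of the finite
subgroups of `G`. -/
def atiyahGroup : AddSubgroup ℝ :=
  AddSubgroup.closure {x : ℝ | ∃ H : Subgroup G, Finite H ∧ x = ((Nat.card H : ℝ))⁻¹}

/-- The operator `L_A` on `ℓ²(G)ⁿ` associated to a matrix `A ∈ Mₙ(ℂ[G])`, given by applying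
`λ` entrywise and letting the resulting matrix of operators act. -/
def LA {n : ℕ} (A : Matrix (Fin n) (Fin n) (MonoidAlgebra ℂ G)) :
    PiLp 2 (fun _ : Fin n => l2 G) →L[ℂ] PiLp 2 (fun _ : Fin n => l2 G) :=
  letI e := PiLp.continuousLinearEquiv 2 ℂ (fun _ : Fin n => l2 G)
  ((e.symm : (∀ _ : Fin n, l2 G) →L[ℂ] PiLp 2 (fun _ : Fin n => l2 G)).comp
      (ContinuousLinearMap.pi fun i =>
        ∑ j, (lam G (A i j)).comp (ContinuousLinearMap.proj j))).comp
    (e : PiLp 2 (fun _ : Fin n => l2 G) →L[ℂ] (∀ _ : Fin n, l2 G))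

/-- The vector `δ_e eᵢ` in `ℓ²(G)ⁿ`. -/
def stdv {n : ℕ} (i : Fin n) : PiLp 2 (fun _ : Fin n => l2 G) :=
  (WithLp.equiv 2 (∀ _ : Fin n, l2 G)).symm (Pi.single i (deltaOne G))

/-- The von Neumann dimension `dim_{LG} ker L_A = Σᵢ ⟨P (δ_e eᵢ), δ_e eᵢ⟩`, where `P` is the
orthogonal projection onto the kernel of `L_A`. -/
def kerDim {n : ℕ} (A : Matrix (Fin n) (Fin n) (MonoidAlgebra ℂ G)) : ℝ :=
  haveI : CompleteSpace (PiLp 2 (fun _ : Fin n => l2 G)) := inferInstance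
  haveI : Submodule.HasOrthogonalProjection
      (LinearMap.ker (LA G A : PiLp 2 (fun _ : Fin n => l2 G) →ₗ[ℂ] PiLp 2 (fun _ : Fin n => l2 G))) :=
    Submodule.HasOrthogonalProjection.ofCompleteSpace _
  ∑ i, (inner (𝕜 := ℂ)
    ((Submodule.orthogonalProjectionOnto (LinearMap.ker (LA G A : PiLp 2 (fun _ : Fin n => l2 G) →ₗ[ℂ] PiLp 2 (fun _ : Fin n => l2 G))) (stdv G i) :
        PiLp 2 (fun _ : Fin n => l2 G)))
    (stdv G i)).re

/-- `G` satisfies the strong Atiyah conjecture: all von Neumann kernel dimensions of matrices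
over `ℂ[G]` lie in the additive subgroup generated by the reciprocals of the orders of finite
subgroups. -/
def SatisfiesStrongAtiyah : Prop :=
  ∀ n : ℕ, 1 ≤ n → ∀ A : Matrix (Fin n) (Fin n) (MonoidAlgebra ℂ G), kerDim G A ∈ atiyahGroup G

variable {G}

/-- The canonical involution on the complex group algebra: `star (Σ cg·g) = Σ conj(cg)·g⁻¹`. -/
def gaStar (a : MonoidAlgebra ℂ G) : MonoidAlgebra ℂ G :=
  MonoidAlgebra.ofCoeff
    (Finsupp.mapDomain (fun g : G => g⁻¹) (Finsupp.mapRange (starRingEnd ℂ) (map_zero _) a.coeff))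

/-- `N` is a C*-norm on the group algebra `ℂ[G]`: a genuine algebra norm satisfying the
C*-identity `N(a* a) = N(a)²`. -/
def IsCstarNorm (N : MonoidAlgebra ℂ G → ℝ) : Prop :=
  (∀ a, 0 ≤ N a) ∧
  (∀ a, N a = 0 ↔ a = 0) ∧
  (∀ a b, N (a + b) ≤ N a + N b) ∧
  (∀ (c : ℂ) (a), N (c • a) = ‖c‖ * N a) ∧
  (∀ a b, N (a * b) ≤ N a * N b) ∧
  (∀ a, N (gaStar a * a) = N a ^ 2)

variable (G)

/-- `ℂ[G]` is C*_r-unique: no C*-norm on `ℂ[G]` is properly majorized by the reduced norm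
`a ↦ ‖λ(a)‖`. -/
def IsCstarRedUnique : Prop :=
  ¬ ∃ N : MonoidAlgebra ℂ G → ℝ, IsCstarNorm N ∧
      (∀ a, N a ≤ ‖lam G a‖) ∧ (∃ a, N a < ‖lam G a‖)

variable {G}

/-- The conjugacy class of an element. -/
def conjClass (g : G) : Set G := {x | IsConj g x}

variable (G)

/-- The FC-centre: the set of elements with finite conjugacy class. -/
def fcCentre : Set G := {g : G | (conjClass g).Finite}

end GroupCstar

/-!
Let `ξ = p δ_e`. Multiplication by the indicator of `⟨z⟩` and the right translations `ρ(g)` commute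
with `λ(⟨z⟩)`, hence with `p`; so `ξ` is supported on `⟨z⟩`, and `ξ ≠ 0` because `p δ_g = ρ(g) ξ`.
If `a(g₀) ≠ 0`, reading `λ(a) ξ = 0` on the coset `g₀⟨z⟩` gives `c ⋆ η = 0` in `ℓ²(ℤ)`, where
`c j = a(g₀ zʲ)` is finitely supported and nonzero and `η n = ξ(zⁿ)` (here `z` has infinite order).
Under the Fourier transform this says `φ F = 0` for the trigonometric polynomial `φ = ∑ c j eⱼ`,
which has only finitely many zeros; hence `F = 0`, so `η = 0` and `ξ = 0`.
-/

namespace LaurentPolynomial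
open Polynomial

theorem eval₂_eq_sum {R S : Type*} [CommSemiring R] [CommSemiring S] (f : R →+* S) (x : Sˣ)
    (p : R[T;T⁻¹]) : eval₂ f x p = p.coeff.sum fun n r => f r * (x ^ n : Sˣ) := by
  induction p using LaurentPolynomial.induction_on' with
  | add p q hp hq =>
    rw [map_add, hp, hq, AddMonoidAlgebra.coeff_add,
      Finsupp.sum_add_index' (by simp) fun _ _ _ => by rw [map_add, add_mul]]
  | C_mul_T n r =>
    rw [eval₂_C_mul_T, ← single_eq_C_mul_T, AddMonoidAlgebra.coeff_single,
      Finsupp.sum_single_index (by simp)]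

theorem finite_setOf_eval₂_eq_zero {R : Type*} [CommRing R] [IsDomain R] {p : R[T;T⁻¹]}
    (hp : p ≠ 0) : {x : Rˣ | eval₂ (RingHom.id R) x p = 0}.Finite := by
  obtain ⟨n, f, hf⟩ := exists_T_pow p
  have hf0 : f ≠ 0 := by
    rintro rfl
    exact hp ((isUnit_T (n : ℤ)).mul_left_eq_zero.1 (by simpa using hf.symm))
  refine ((Polynomial.finite_setOfPred_isRoot hf0).preimage Units.val_injective.injOn).subset
    fun x (hx : eval₂ (RingHom.id R) x p = 0) => ?_
  have := congrArg (eval₂ (RingHom.id R) x) hf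
  rw [eval₂_toLaurent, map_mul, hx, zero_mul] at this
  exact this

end LaurentPolynomial

section Fourier

open MeasureTheory AddCircle

variable {T : ℝ}

variable (T) in
def trigPoly (c : ℤ →₀ ℂ) : C(AddCircle T, ℂ) := c.sum fun j r => r • fourier j

theorem trigPoly_apply (c : ℤ →₀ ℂ) (t : AddCircle T) :
    trigPoly T c t = c.sum fun j r => r * fourier j t := by
  simp [trigPoly, Finsupp.sum]

variable [hT : Fact (0 < T)]

/-- Makes the Haar measure on the circle atomless, via `IsHaarMeasure.nullSingletonClass`. -/
instance AddCircle.instNontrivial : Nontrivial (AddCircle T) :=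
  ⟨⟨↑(T / 2), 0, fun h => by
    simpa [h] using AddCircle.addOrderOf_period_div (p := T) (n := 2) two_pos⟩⟩

theorem fourierCoeff_fourier_smul {E : Type*} [NormedAddCommGroup E] [NormedSpace ℂ E]
    (f : AddCircle T → E) (j n : ℤ) :
    fourierCoeff (fun t => fourier j t • f t) n = fourierCoeff f (n - j) := by
  simp only [fourierCoeff, smul_smul, ← fourier_add, neg_sub', sub_neg_eq_add]

theorem ae_eq_zero_of_fourierCoeff_eq_zero {f : AddCircle T → ℂ} (hf : MemLp f 2 haarAddCircle)
    (h : fourierCoeff f = 0) : f =ᵐ[haarAddCircle] 0 := by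
  have h0 : hf.toLp f = 0 := fourierBasis.repr.injective <| by
    ext n
    simp [fourierBasis_repr, fourierCoeff_congr_ae hf.coeFn_toLp, h]
  exact hf.coeFn_toLp.symm.trans (Lp.eq_zero_iff_ae_eq_zero.1 h0)

theorem finite_setOf_trigPoly_eq_zero {c : ℤ →₀ ℂ} (hc : c ≠ 0) :
    {t : AddCircle T | trigPoly T c t = 0}.Finite := by
  set u : AddCircle T → ℂˣ := fun t => Circle.toUnits (toCircle t)
  have hu : Function.Injective u := fun s t h =>
    injective_toCircle hT.out.ne' (Circle.ext (by simpa [u] using congrArg Units.val h))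
  refine ((LaurentPolynomial.finite_setOf_eval₂_eq_zero (p := AddMonoidAlgebra.ofCoeff c)
    (by simpa using hc)).preimage hu.injOn).subset fun t (ht : trigPoly T c t = 0) => ?_
  simp only [Set.mem_preimage, Set.mem_ofPred_eq, LaurentPolynomial.eval₂_eq_sum]
  rw [← ht, trigPoly_apply]
  simp [u, fourier_apply, toCircle_zsmul]

theorem fourierCoeff_trigPoly_mul (c : ℤ →₀ ℂ) {f : AddCircle T → ℂ}
    (hf : Integrable f haarAddCircle) (n : ℤ) :
    fourierCoeff (fun t => trigPoly T c t * f t) n =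
      c.sum fun j r => r * fourierCoeff f (n - j) := by
  have : (fun t => trigPoly T c t * f t) =
      ∑ j ∈ c.support, c j • fun t => fourier j t • f t := by
    ext t; simp [trigPoly_apply, Finsupp.sum, Finset.sum_mul, mul_assoc]
  rw [this, fourierCoeff.sum _ _ fun j _ => (hf.fourier_smul j).smul (c j), Finset.sum_apply]
  simp only [Finsupp.sum, fourierCoeff.const_smul, fourierCoeff_fourier_smul]
  rfl

theorem lp_eq_zero_of_convolution_eq_zero {c : ℤ →₀ ℂ} (hc : c ≠ 0)
    {η : lp (fun _ : ℤ => ℂ) 2} (h : ∀ m, (c.sum fun j r => r * η (m - j)) = 0) : η = 0 := by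
  set F := (fourierBasis (T := 1)).repr.symm η
  have hF : fourierCoeff F = η := funext fun n => by
    rw [← fourierBasis_repr, LinearIsometryEquiv.apply_symm_apply]
  have hmem : MemLp (fun t => trigPoly 1 c t * F t) 2 haarAddCircle :=
    (Lp.memLp F).of_le_mul (c := ‖trigPoly 1 c‖)
      ((trigPoly 1 c).continuous.aestronglyMeasurable.mul (Lp.aestronglyMeasurable F))
      (.of_forall fun t => by
        rw [norm_mul]; gcongr; exact (trigPoly 1 c).norm_coe_le_norm t)
  have hprod := ae_eq_zero_of_fourierCoeff_eq_zero hmem <| funext fun n => by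
    rw [fourierCoeff_trigPoly_mul c ((Lp.memLp F).integrable one_le_two), hF]
    exact h n
  have hφ : ∀ᵐ t ∂haarAddCircle, trigPoly 1 c t ≠ 0 :=
    (finite_setOf_trigPoly_eq_zero hc).countable.ae_notMem _
  have hF0 : ⇑F =ᵐ[haarAddCircle] 0 := by
    filter_upwards [hprod, hφ] with t h1 h2
    exact (mul_eq_zero.1 h1).resolve_left h2
  refine lp.ext (funext fun n => ?_)
  rw [← hF, fourierCoeff_congr_ae hF0]
  simp [fourierCoeff]

end Fourier

namespace GroupCstar

variable {G : Type*} [Group G]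

def rightReg (g : G) : B G :=
  (lpShift (Equiv.mulRight g)).toLinearIsometry.toContinuousLinearMap

@[simp] lemma rightReg_apply (g : G) (f : l2 G) (x : G) :
    (rightReg g f : G → ℂ) x = f (x * g⁻¹) := rfl

lemma rightReg_mem_commutant (S : Set G) (g : G) :
    rightReg g ∈ commutant ((fun w : G => leftReg w) '' S) := by
  rintro _ ⟨w, -, rfl⟩
  ext f x
  simp [mul_assoc]

lemma eq_zero_of_forall_commute_rightReg {T : B G} (hT : ∀ g, rightReg g * T = T * rightReg g)
    (h : T (deltaOne G) = 0) : T = 0 := by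
  classical
  refine lp.ext_continuousLinearMap ENNReal.ofNat_ne_top fun g =>
    ContinuousLinearMap.ext fun r => ?_
  have hsingle : lp.single 2 g r = r • rightReg g (deltaOne G) := by
    ext x
    by_cases hx : x = g <;> simp [deltaOne, lp.single_apply, hx, mul_inv_eq_one]
  have hT_single : T (rightReg g (deltaOne G)) = 0 := by
    rw [← mul_apply_eq_comp, ← hT, mul_apply_eq_comp, h, map_zero]
  simp [hsingle, hT_single]

def indicatorL {α : Type*} (S : Set α) : l2 α →L[ℂ] l2 α :=
  LinearMap.mkContinuous
    { toFun f := ⟨S.indicator f, (lp.memℓp f).mono' fun _ => norm_indicator_le_norm_self _ _⟩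
      map_add' f g := lp.ext (Set.indicator_add' S f g)
      map_smul' c f := lp.ext (Set.indicator_const_smul S c f) }
    1 fun f => by
      rw [one_mul]; exact lp.norm_mono two_ne_zero fun _ => norm_indicator_le_norm_self _ _

@[simp] lemma indicatorL_apply {α : Type*} (S : Set α) (f : l2 α) (x : α) :
    (indicatorL S f : α → ℂ) x = S.indicator f x := rfl

lemma indicatorL_mem_commutant (H : Subgroup G) :
    indicatorL H ∈ commutant ((fun w : G => leftReg w) '' H) := by
  rintro _ ⟨w, hw, rfl⟩
  ext f x
  classical
  simp [Set.indicator_apply, H.mul_mem_cancel_left (inv_mem hw)]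

lemma indicatorL_deltaOne {S : Set G} (hS : (1 : G) ∈ S) :
    indicatorL S (deltaOne G) = deltaOne G := by
  ext x
  by_cases hx : x = 1 <;> simp [deltaOne, lp.single_apply, hx, hS]

lemma apply_deltaOne_ne_zero {S : Set G} {p : B G}
    (hp : p ∈ commutant (commutant ((fun w : G => leftReg w) '' S))) (hp0 : p ≠ 0) :
    p (deltaOne G) ≠ 0 :=
  fun h => hp0 (eq_zero_of_forall_commute_rightReg (fun g => hp _ (rightReg_mem_commutant S g)) h)

lemma apply_deltaOne_eq_zero_of_notMem {H : Subgroup G} {p : B G}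
    (hp : p ∈ commutant (commutant ((fun w : G => leftReg w) '' H))) {x : G} (hx : x ∉ H) :
    p (deltaOne G) x = 0 := by
  have h := congrArg (fun T : B G => (T (deltaOne G) : G → ℂ) x) (hp _ (indicatorL_mem_commutant H))
  simpa [indicatorL_deltaOne H.one_mem, hx] using h.symm

lemma lam_apply_apply (a : MonoidAlgebra ℂ G) (f : l2 G) (x : G) :
    (lam G a f : G → ℂ) x = a.coeff.sum fun g r => r * f (g⁻¹ * x) := by
  rw [lam, MonoidAlgebra.lift_apply, Finsupp.sum, sum_apply, lp.coeFn_sum,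
    Finset.sum_apply]
  rfl

section CyclicSubgroup

variable {z : G}

lemma lam_apply_mul_zpow (hz : Function.Injective (z ^ · : ℤ → G)) {ξ : l2 G}
    (hξ : ∀ x ∉ Subgroup.zpowers z, ξ x = 0) (a : MonoidAlgebra ℂ G) (g₀ : G) (m : ℤ) :
    (lam G a ξ : G → ℂ) (g₀ * z ^ m) =
      (a.coeff.comapDomain (g₀ * z ^ ·) ((mul_right_injective g₀).comp hz).injOn).sum
        fun j r => r * ξ (z ^ (m - j)) := by
  rw [lam_apply_apply]
  refine (Finset.sum_bij_ne_zero (fun j _ _ => g₀ * z ^ j) (fun j hj _ => by simpa using hj)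
    (fun i _ _ j _ _ h => hz (mul_left_cancel h)) (fun g hg hne => ?_) fun j _ _ => ?_).symm
  · have hmem : g⁻¹ * (g₀ * z ^ m) ∈ Subgroup.zpowers z := by
      by_contra h; exact hne (by simp [hξ _ h])
    obtain ⟨k, hk⟩ := Subgroup.mem_zpowers_iff.1 hmem
    have hgk : g₀ * z ^ (m - k) = g := by rw [zpow_sub, hk]; group
    refine ⟨m - k, ?_, ?_, hgk⟩
    · simpa [hgk] using hg
    · simpa [hgk, hk] using hne
  · dsimp only
    rw [Finsupp.comapDomain_apply, show (g₀ * z ^ j)⁻¹ * (g₀ * z ^ m) = z ^ (m - j) by group]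

lemma eq_zero_of_lam_apply_eq_zero (hz : ¬IsOfFinOrder z) {ξ : l2 G} (hξ0 : ξ ≠ 0)
    (hξ : ∀ x ∉ Subgroup.zpowers z, ξ x = 0) {a : MonoidAlgebra ℂ G} (ha : lam G a ξ = 0) :
    a = 0 := by
  have hinj := injective_zpow_iff_not_isOfFinOrder.2 hz
  set η : lp (fun _ : ℤ => ℂ) 2 := ⟨fun n => ξ (z ^ n), by
    show Memℓp _ 2
    rw [memℓp_gen_iff two_toReal_pos]
    exact ((lp.memℓp ξ).summable two_toReal_pos).comp_injective hinj⟩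
  have hη : η ≠ 0 := fun hη => hξ0 <| lp.ext <| funext fun x => by
    by_cases hx : x ∈ Subgroup.zpowers z
    · obtain ⟨k, rfl⟩ := Subgroup.mem_zpowers_iff.1 hx
      exact congrFun (congrArg (⇑) hη) k
    · exact hξ x hx
  by_contra ha0
  obtain ⟨g₀, hg₀⟩ : ∃ g, a.coeff g ≠ 0 := by
    by_contra! h
    exact ha0 (MonoidAlgebra.ext (Finsupp.ext h))
  set c := a.coeff.comapDomain (g₀ * z ^ ·) ((mul_right_injective g₀).comp hinj).injOn
  have hc : c ≠ 0 := Finsupp.ne_iff.2 ⟨0, by simpa [c] using hg₀⟩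
  refine hη (lp_eq_zero_of_convolution_eq_zero hc fun m => ?_)
  rw [← lam_apply_mul_zpow hinj hξ, ha]
  rfl

end CyclicSubgroup

end GroupCstar

open GroupCstar

theorem lam_faithful_on_central_cutdown_general
    (Γ : Type*) [Group Γ] (z : Γ)
    (hord : ¬ IsOfFinOrder z)
    (p : B Γ)
    (hp : p ∈ commutant (commutant ((fun w : Γ => leftReg w) '' (Subgroup.zpowers z))))
    (hpne : p ≠ 0)
    (a : MonoidAlgebra ℂ Γ) (ha : lam Γ a * p = 0) :
    a = 0 :=
  eq_zero_of_lam_apply_eq_zero hord (apply_deltaOne_ne_zero hp hpne)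
    (fun _ hx => apply_deltaOne_eq_zero_of_notMem hp hx)
    (by rw [← mul_apply_eq_comp, ha]; rfl)

/-- If `z` is a central element of infinite order in a countable group `Γ`
and `p` is a nonzero projection in the von Neumann algebra `LZ` generated by `λ(z)`, then
`a ↦ λ(a) p` is injective on the group ring: `λ(a) p = 0` for `a ∈ ℂ[Γ]` forces `a = 0`. -/
theorem lam_faithful_on_central_cutdown
    (Γ : Type*) [Group Γ] [Countable Γ] (z : Γ) (hz : z ∈ Subgroup.center Γ)
    (hord : ¬ IsOfFinOrder z)
    (p : B Γ)
    (hp : p ∈ commutant (commutant ((fun w : Γ => leftReg w) '' (Subgroup.zpowers z))))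
    (hproj : IsProjection p) (hpne : p ≠ 0)
    (a : MonoidAlgebra ℂ Γ) (ha : lam Γ a * p = 0) :
    a = 0 :=
  lam_faithful_on_central_cutdown_general Γ z hord p hp hpne a ha
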